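/- Let (G,p) be a well-positioned framework in (ℝ^d,‖·‖_P). If the monochrome subgraphs G_1,…,G_d corresponding to linearly independent vectors b_1,…,b_d each contain a spanning tree of G, then (G,p) is infinitesimally rigid: every infinitesimal flex u satisfies u_1=u_2=…=u_n. -/

import Mathlib

open Filter

/-- Euclidean dot product on `ℝ^d`. -/
def dotp {d : ℕ} (a b : Fin d → ℝ) : ℝ := ∑ i, a i * b i

/-- The polytopic norm `‖a‖_P = max_k |a · b_k|` determined by vectors `b₁,…,b_s`. -/
noncomputable def pNorm {d s : ℕ} (b : Fin s → Fin d → ℝ) (a : Fin d → ℝ) : ℝ :=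
  sSup {x : ℝ | ∃ k, x = |dotp (b k) a|}

/-- An infinitesimal flex of `(G,p)` with respect to the polytopic norm given by `b`. -/
def IsFlexP {d s n : ℕ} (b : Fin s → Fin d → ℝ) (G : SimpleGraph (Fin n))
    (p u : Fin n → Fin d → ℝ) : Prop :=
  ∀ i j, G.Adj i j →
    (fun t : ℝ => pNorm b ((p i + t • u i) - (p j + t • u j)) - pNorm b (p i - p j))
      =o[nhds (0 : ℝ)] (fun t : ℝ => t)

/-- The monochrome subgraph of colour `k` induced by an edge colouring `col`. -/
def monochrome {s n : ℕ} (G : SimpleGraph (Fin n)) (col : Fin n → Fin n → Fin s)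
    (k : Fin s) : SimpleGraph (Fin n) :=
  SimpleGraph.fromRel (fun i j => G.Adj i j ∧ col i j = k)

lemma dotp_eq_dotProduct {d : ℕ} (a c : Fin d → ℝ) : dotp a c = dotProduct a c := rfl

lemma dotp_add_smul {d : ℕ} (a v w : Fin d → ℝ) (t : ℝ) :
    dotp a (v + t • w) = dotp a v + t * dotp a w := by
  unfold dotp
  rw [Finset.mul_sum, ← Finset.sum_add_distrib]
  refine Finset.sum_congr rfl fun x _ => ?_
  simp only [Pi.add_apply, Pi.smul_apply, smul_eq_mul]
  ring

lemma dotp_sub {d : ℕ} (a v w : Fin d → ℝ) : dotp a (v - w) = dotp a v - dotp a w := by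
  simp [dotp, mul_sub, Finset.sum_sub_distrib]

lemma pNorm_set_eq {d s : ℕ} (b : Fin s → Fin d → ℝ) (a : Fin d → ℝ) :
    {x : ℝ | ∃ k, x = |dotp (b k) a|} = Set.range (fun k => |dotp (b k) a|) := by
  ext x; simp [eq_comm]

lemma le_pNorm {d s : ℕ} (b : Fin s → Fin d → ℝ) (a : Fin d → ℝ) (k : Fin s) :
    |dotp (b k) a| ≤ pNorm b a := by
  rw [pNorm, pNorm_set_eq]
  exact le_csSup (Set.finite_range _).bddAbove ⟨k, rfl⟩

lemma pNorm_eq_of_max {d s : ℕ} (b : Fin s → Fin d → ℝ) (a : Fin d → ℝ) (c : Fin s)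
    (h : ∀ k, |dotp (b k) a| ≤ |dotp (b c) a|) : pNorm b a = |dotp (b c) a| := by
  haveI : Nonempty (Fin s) := ⟨c⟩
  refine le_antisymm ?_ (le_pNorm b a c)
  rw [pNorm, pNorm_set_eq]
  exact csSup_le (Set.range_nonempty _) (by rintro x ⟨k, rfl⟩; exact h k)

lemma abs_affine_littleO {m q : ℝ}
    (h : (fun t : ℝ => |m + t * q| - |m|) =o[nhds (0:ℝ)] (fun t : ℝ => t)) : q = 0 := by
  by_contra hq
  have hq' : 0 < |q| := abs_pos.mpr hq
  have h1 := (Asymptotics.isLittleO_iff.mp h) (half_pos hq')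
  have h2 : ∀ᶠ t : ℝ in nhds 0, |t * q| < |m| ∨ m = 0 := by
    by_cases hm : m = 0
    · exact Eventually.of_forall fun t => Or.inr hm
    · have ht : Filter.Tendsto (fun t : ℝ => |t * q|) (nhds 0) (nhds 0) := by
        have : Continuous fun t : ℝ => |t * q| := by continuity
        simpa using this.tendsto 0
      exact (ht.eventually_lt_const (abs_pos.mpr hm)).mono fun t h => Or.inl h
  have key : ∀ᶠ t : ℝ in nhds 0, |t| * |q| ≤ |q| / 2 * |t| := by
    filter_upwards [h1, h2] with t h1 h2
    have habs : |(|m + t * q| - |m|)| = |t| * |q| := by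
      rcases h2 with h2 | h2
      · rcases lt_trichotomy m 0 with hm | hm | hm
        · have h3 : m + t * q < 0 := by
            have := le_abs_self (t * q)
            rw [abs_of_neg hm] at h2; linarith
          rw [abs_of_neg hm, abs_of_neg h3, ← abs_mul]
          rw [show -(m + t*q) - -m = -(t*q) by ring, abs_neg]
        · simp [hm] at h2; exact absurd h2 (not_lt.mpr (by positivity))
        · have h3 : 0 < m + t * q := by
            have := neg_abs_le (t * q)
            rw [abs_of_pos hm] at h2; linarith
          rw [abs_of_pos hm, abs_of_pos h3, ← abs_mul]
          rw [show m + t*q - m = t*q by ring]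
      · simp [h2, abs_mul]
    simp only [Real.norm_eq_abs] at h1
    rw [habs] at h1
    exact h1
  have key' : ∀ᶠ t : ℝ in nhdsWithin 0 (Set.Ioi 0), |t| * |q| ≤ |q| / 2 * |t| :=
    key.filter_mono nhdsWithin_le_nhds
  obtain ⟨t, ht, ht0⟩ := (key'.and (eventually_mem_nhdsWithin)).exists
  have ht0' : 0 < t := ht0
  rw [abs_of_pos ht0'] at ht
  nlinarith

lemma flex_edge {d s n : ℕ} (b : Fin s → Fin d → ℝ) (G : SimpleGraph (Fin n))
    (p u : Fin n → Fin d → ℝ) (col : Fin n → Fin n → Fin s)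
    (hwp : ∀ i j, G.Adj i j →
      ∀ k, pNorm b (p i - p j) = |dotp (b k) (p i - p j)| ↔ k = col i j)
    (hu : IsFlexP b G p u) (i j : Fin n) (hij : G.Adj i j) :
    dotp (b (col i j)) (u i - u j) = 0 := by
  set c := col i j with hc
  set v := p i - p j with hv
  set w := u i - u j with hw
  have hc0 : pNorm b v = |dotp (b c) v| := ((hwp i j hij c).mpr rfl)
  have hstrict : ∀ k, k ≠ c → |dotp (b k) v| < |dotp (b c) v| := by
    intro k hk
    rcases lt_or_eq_of_le (le_pNorm b v k) with h | h
    · rwa [hc0] at h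
    · exact absurd ((hwp i j hij k).mp h.symm) hk
  -- eventually the max is attained at c
  have hev : ∀ᶠ t : ℝ in nhds 0, ∀ k,
      |dotp (b k) (v + t • w)| ≤ |dotp (b c) (v + t • w)| := by
    rw [Filter.eventually_all]
    intro k
    by_cases hk : k = c
    · subst hk; exact Eventually.of_forall fun _ => le_rfl
    · have hcont : ∀ k' : Fin s, ContinuousAt (fun t : ℝ => |dotp (b k') (v + t • w)|) 0 := by
        intro k'
        have : Continuous fun t : ℝ => |dotp (b k') v + t * dotp (b k') w| := by continuity
        have heq : (fun t : ℝ => |dotp (b k') (v + t • w)|) =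
            fun t : ℝ => |dotp (b k') v + t * dotp (b k') w| := by
          funext t; rw [dotp_add_smul]
        rw [heq]; exact this.continuousAt
      have h0 : |dotp (b k) (v + (0:ℝ) • w)| < |dotp (b c) (v + (0:ℝ) • w)| := by
        simpa using hstrict k hk
      exact ((hcont k).eventually_lt (hcont c) h0).mono fun t ht => ht.le
  have hflex := hu i j hij
  have heqfun : ∀ t : ℝ, (p i + t • u i) - (p j + t • u j) = v + t • w := by
    intro t; funext x; simp [hv, hw, mul_sub]; ring
  have hflex' : (fun t : ℝ => |dotp (b c) v + t * dotp (b c) w| - |dotp (b c) v|)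
      =o[nhds (0:ℝ)] (fun t : ℝ => t) := by
    refine hflex.congr' ?_ (EventuallyEq.refl _ _)
    filter_upwards [hev] with t ht
    rw [heqfun t, pNorm_eq_of_max b _ c ht, dotp_add_smul, hc0]
  exact abs_affine_littleO hflex'

/-- If the monochrome subgraphs for `d` linearly independent vectors `b₁,…,b_d`
each contain a spanning tree, then the well-positioned framework `(G,p)` is
infinitesimally rigid: every infinitesimal flex is constant. -/
theorem monochrome_spanning_implies_rigid {d s n : ℕ}
    (b : Fin s → Fin d → ℝ) (G : SimpleGraph (Fin n))
    (p : Fin n → Fin d → ℝ) (col : Fin n → Fin n → Fin s)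
    (hwp : ∀ i j, G.Adj i j →
      ∀ k, pNorm b (p i - p j) = |dotp (b k) (p i - p j)| ↔ k = col i j)
    (hds : d ≤ s)
    (hind : LinearIndependent ℝ (fun k : Fin d => b (Fin.castLE hds k)))
    (hspan : ∀ k : Fin d, (monochrome G col (Fin.castLE hds k)).Connected) :
    ∀ u, IsFlexP b G p u → ∀ i j, u i = u j := by
  intro u hu i j
  rcases Nat.eq_zero_or_pos d with hd | hd
  · subst hd; funext x; exact x.elim0
  -- along each monochrome graph, dot products are constant
  have hmono : ∀ k : Fin d, dotp (b (Fin.castLE hds k)) (u i) = dotp (b (Fin.castLE hds k)) (u j) := by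
    intro k
    obtain ⟨wlk⟩ := (hspan k) i j
    induction wlk with
    | nil => rfl
    | @cons a c e hadj wlk ih =>
      rw [← ih]
      rw [monochrome, SimpleGraph.fromRel_adj] at hadj
      rcases hadj.2 with ⟨hAdj, hcol⟩ | ⟨hAdj, hcol⟩
      · have := flex_edge b G p u col hwp hu a c hAdj
        rw [hcol, dotp_sub] at this; linarith
      · have := flex_edge b G p u col hwp hu c a hAdj
        rw [hcol, dotp_sub] at this; linarith
  -- linear algebra: b k span, so u i - u j = 0
  set v := u i - u j with hv
  have hvk : ∀ k : Fin d, dotProduct (b (Fin.castLE hds k)) v = 0 := by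
    intro k
    rw [← dotp_eq_dotProduct, hv, dotp_sub, hmono k, sub_self]
  haveI : Nonempty (Fin d) := ⟨⟨0, hd⟩⟩
  have hcard : Fintype.card (Fin d) = Module.finrank ℝ (Fin d → ℝ) := by simp
  let B := basisOfLinearIndependentOfCardEqFinrank hind hcard
  let L : (Fin d → ℝ) →ₗ[ℝ] ℝ :=
    { toFun := fun x => dotProduct x v
      map_add' := fun x y => add_dotProduct x y v
      map_smul' := fun c x => smul_dotProduct c x v }
  have hL : L = 0 := by
    apply B.ext
    intro k
    have hBk : B k = b (Fin.castLE hds k) :=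
      congrFun (coe_basisOfLinearIndependentOfCardEqFinrank hind hcard) k
    rw [hBk]
    simpa [L] using hvk k
  have hvv : dotProduct v v = 0 := by
    have := congrFun (congrArg (fun f => f.toFun) hL) v
    simpa [L] using this
  have : v = 0 := dotProduct_self_eq_zero.mp hvv
  rw [hv] at this
  exact sub_eq_zero.mp this
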